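/- arXiv:0905.3764 — 2 statements merged into one kernel-verified Lean document; each statement's English description precedes it below -/
import Mathlib

section
/- Let D be a finite distributive lattice in which the meet of any two join-irreducibles is either the minimum or a join-irreducible, and let χ be the Euler characteristic valuation (χ(0̂)=0, χ(s)=1 for each join-irreducible s). If x = s₁ ∨ ⋯ ∨ s_k where (s₁,...,s_k) is an antichain of join-irreducibles such that ⋀_{i∈S} sᵢ = s_{min S} ∧ s_{max S} for every nonempty S ⊆ [k] and sᵢ ∧ s_{i+1} ≠ 0̂ for all i < k, then χ(x) = 1. -/
/-!
Induct on the number of join-irreducibles. Writing `x' = s₀ ⊔ ⋯ ⊔ sₘ`, the meet condition gives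
`sᵢ ⊓ sₘ₊₁ ≤ sₘ` for `i ≤ m`, so by distributivity `x' ⊓ sₘ₊₁ = sₘ ⊓ sₘ₊₁`. This is a nonzero
meet of join-irreducibles, hence join-irreducible, and the valuation identity gives
`χ(x' ⊔ sₘ₊₁) = χ(x') + 1 - 1`.
-/

open Finset

theorem inf_le_of_forall_inf'_eq_inf_min'_max' {ι D : Type*} [LinearOrder ι] [SemilatticeInf D]
    {s : ι → D}
    (hS : ∀ (S : Finset ι) (h : S.Nonempty), S.inf' h s = s (S.min' h) ⊓ s (S.max' h))
    {i j k : ι} (hij : i ≤ j) (hjk : j ≤ k) : s i ⊓ s k ≤ s j := by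
  have hne : ({i, j, k} : Finset ι).Nonempty := insert_nonempty _ _
  have hmin : ({i, j, k} : Finset ι).min' hne = i :=
    le_antisymm (min'_le _ _ (by simp)) (le_min' _ _ _ (by simp [hij, hij.trans hjk]))
  have hmax : ({i, j, k} : Finset ι).max' hne = k :=
    le_antisymm (max'_le _ _ _ (by simp [hjk, hij.trans hjk])) (le_max' _ _ (by simp))
  calc s i ⊓ s k = ({i, j, k} : Finset ι).inf' hne s := by rw [hS, hmin, hmax]
    _ ≤ s j := inf'_le _ (by simp)

theorem Finset.sup_inf_eq_of_forall_inf_le {ι D : Type*} [DistribLattice D] [OrderBot D]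
    {t : Finset ι} {f : ι → D} {a : D} {j : ι} (hj : j ∈ t)
    (h : ∀ i ∈ t, f i ⊓ a ≤ f j ⊓ a) : t.sup f ⊓ a = f j ⊓ a := by
  rw [sup_inf_distrib_right]
  exact le_antisymm (Finset.sup_le h) (le_sup (f := fun i => f i ⊓ a) hj)

theorem chi_sup_eq_one_of_inf_le {D : Type*} [DistribLattice D] [OrderBot D] {χ : D → ℝ}
    (hval : ∀ x y : D, χ (x ⊔ y) + χ (x ⊓ y) = χ x + χ y)
    (hji : ∀ s : D, SupIrred s → χ s = 1)
    (hmeet : ∀ s t : D, SupIrred s → SupIrred t → s ⊓ t = ⊥ ∨ SupIrred (s ⊓ t)) :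
    ∀ {m : ℕ} (s : Fin (m + 1) → D), (∀ i, SupIrred (s i)) →
      (∀ i j k, i ≤ j → j ≤ k → s i ⊓ s k ≤ s j) →
      (∀ i : Fin m, s i.castSucc ⊓ s i.succ ≠ ⊥) → χ (univ.sup s) = 1
  | 0, s, hirr, _, _ => by
    rw [show (univ : Finset (Fin 1)) = {0} from rfl, sup_singleton]
    exact hji _ (hirr _)
  | m + 1, s, hirr, hconv, hcons => by
    set t : Fin (m + 1) → D := fun i => s i.castSucc
    set a := s (Fin.last (m + 1))
    have hsup : univ.sup s = univ.sup t ⊔ a := by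
      rw [Fin.univ_castSuccEmb, sup_cons, sup_map, sup_comm]
      rfl
    have hinf : univ.sup t ⊓ a = t (Fin.last m) ⊓ a :=
      sup_inf_eq_of_forall_inf_le (mem_univ _) fun i _ =>
        le_inf (hconv _ _ _ (Fin.castSucc_le_castSucc_iff.2 (Fin.le_last i))
          (Fin.le_last _)) inf_le_right
    have hχinf : χ (t (Fin.last m) ⊓ a) = 1 := by
      have hne : t (Fin.last m) ⊓ a ≠ ⊥ := by simpa using hcons (Fin.last m)
      exact hji _ ((hmeet _ _ (hirr _) (hirr _)).resolve_left hne)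
    have hχt : χ (univ.sup t) = 1 := by
      refine chi_sup_eq_one_of_inf_le hval hji hmeet t (fun i => hirr _)
        (fun i j k hij hjk => hconv _ _ _ (Fin.castSucc_le_castSucc_iff.2 hij)
          (Fin.castSucc_le_castSucc_iff.2 hjk)) fun i => ?_
      have h := hcons i.castSucc
      rwa [Fin.succ_castSucc] at h
    have hstep := hval (univ.sup t) a
    rw [hinf, hχinf, hχt, hji a (hirr _)] at hstep
    rw [hsup]
    linarith

theorem chi_quasi_join_irreducible_general {D : Type*} [DistribLattice D]
    [OrderBot D] (χ : D → ℝ)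
    (hval : ∀ x y : D, χ (x ⊔ y) + χ (x ⊓ y) = χ x + χ y)
    (hji : ∀ s : D, SupIrred s → χ s = 1)
    (hmeet : ∀ s t : D, SupIrred s → SupIrred t → s ⊓ t = ⊥ ∨ SupIrred (s ⊓ t))
    (m : ℕ) (s : Fin (m + 1) → D)
    (hirr : ∀ i, SupIrred (s i))
    (hS : ∀ (S : Finset (Fin (m + 1))) (h : S.Nonempty),
      S.inf' h s = s (S.min' h) ⊓ s (S.max' h))
    (hcons : ∀ i : Fin m, s i.castSucc ⊓ s i.succ ≠ ⊥) :
    χ (Finset.univ.sup s) = 1 :=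
  chi_sup_eq_one_of_inf_le hval hji hmeet s hirr
    (fun _ _ _ => inf_le_of_forall_inf'_eq_inf_min'_max' hS) hcons

/-- In a finite distributive lattice where the meet of two join-irreducibles is
the minimum or a join-irreducible, and where `χ` is the Euler characteristic
valuation, any element expressible as the join of an antichain `(s₁,...,s_k)` of
join-irreducibles with `⋀_{i∈S} sᵢ = s_{min S} ⊓ s_{max S}` for every nonempty
`S` and `sᵢ ⊓ s_{i+1} ≠ ⊥` for all `i < k` has characteristic `1`. -/
theorem chi_quasi_join_irreducible {D : Type*} [DistribLattice D] [Fintype D]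
    [OrderBot D] (χ : D → ℝ) (h0 : χ ⊥ = 0)
    (hval : ∀ x y : D, χ (x ⊔ y) + χ (x ⊓ y) = χ x + χ y)
    (hji : ∀ s : D, SupIrred s → χ s = 1)
    (hmeet : ∀ s t : D, SupIrred s → SupIrred t → s ⊓ t = ⊥ ∨ SupIrred (s ⊓ t))
    (m : ℕ) (s : Fin (m + 1) → D)
    (hirr : ∀ i, SupIrred (s i))
    (hanti : ∀ i j, i ≠ j → ¬ s i ≤ s j)
    (hS : ∀ (S : Finset (Fin (m + 1))) (h : S.Nonempty),
      S.inf' h s = s (S.min' h) ⊓ s (S.max' h))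
    (hcons : ∀ i : Fin m, s i.castSucc ⊓ s i.succ ≠ ⊥) :
    χ (Finset.univ.sup s) = 1 :=
  chi_quasi_join_irreducible_general χ hval hji hmeet m s hirr hS hcons
end

section
/- The rank polynomials M_n(q) of the Motzkin lattices satisfy M_{n+2}(q) = M_{n+1}(q) + Σ_{k=0}^n q^{k+1} M_k(q) M_{n-k}(q) with M_0(q) = M_1(q) = 1, where M_n(q) = Σ_{x ∈ M_n} q^{A(x)} and A(x) is the area under the Motzkin path x. -/
/-- A Motzkin path of length `n`. -/
structure MotzkinPath (n : ℕ) where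
  f : ℕ → ℕ
  init : f 0 = 0
  tail : ∀ k, n ≤ k → f k = 0
  step : ∀ k < n, (f (k + 1) : ℤ) - f k = 1 ∨ f (k + 1) = f k ∨
    (f (k + 1) : ℤ) - f k = -1

namespace MotzkinPath

/-- The area under a Motzkin path, `A(x) = Σ_{k<n} (f(k)+f(k+1))/2`;
this is the rank in the Motzkin lattice. -/
def area {n : ℕ} (x : MotzkinPath n) : ℕ :=
  (∑ k ∈ Finset.range n, (x.f k + x.f (k + 1))) / 2

/-- The rank polynomial of the Motzkin lattice `M_n`: `M_n(q) = Σ_x q^{A(x)}`. -/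
noncomputable def rankPoly (n : ℕ) : Polynomial ℚ :=
  ∑ᶠ x : MotzkinPath n, Polynomial.X ^ area x

end MotzkinPath

/-!
Cutting a path of length `n + 2` after its first step, and after its first return to the axis
when that step is `U`, identifies it with either `H γ` for `γ` of length `n + 1`, or `U a D b`
for `a` of length `k ≤ n` and `b` of length `n - k`. Lifting `a` by one adds `k` to its area
and the steps `U`, `D` add a half each, so `A(U a D b) = A(a) + A(b) + k + 1`; summing `q ^ A`
over both kinds gives the recurrence.
-/

open Finset Polynomial

namespace MotzkinPath

variable {n : ℕ}

@[ext]
theorem ext {x y : MotzkinPath n} (h : x.f = y.f) : x = y := by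
  cases x; cases y; cases h; rfl

theorem f_succ_le (x : MotzkinPath n) (k : ℕ) : x.f (k + 1) ≤ x.f k + 1 := by
  by_cases hk : k < n
  · have := x.step k hk; omega
  · rw [x.tail (k + 1) (by omega)]; omega

theorem f_le_f_succ (x : MotzkinPath n) (k : ℕ) : x.f k ≤ x.f (k + 1) + 1 := by
  by_cases hk : k < n
  · have := x.step k hk; omega
  · rw [x.tail k (by omega)]; omega

theorem f_le (x : MotzkinPath n) (k : ℕ) : x.f k ≤ k := by
  induction k with
  | zero => rw [x.init]
  | succ k ih => have := x.f_succ_le k; omega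

instance : Finite (MotzkinPath n) :=
  Finite.of_injective
    (fun x (i : Fin (n + 1)) => (⟨x.f i, (x.f_le i).trans_lt i.isLt⟩ : Fin (n + 1)))
    fun x y h => ext <| funext fun k => by
      by_cases hk : k ≤ n
      · simpa using congrArg Fin.val (congrFun h ⟨k, by omega⟩)
      · rw [x.tail k (by omega), y.tail k (by omega)]

noncomputable instance : Fintype (MotzkinPath n) := Fintype.ofFinite _

theorem rankPoly_eq_sum (n : ℕ) : rankPoly n = ∑ x : MotzkinPath n, X ^ x.area :=
  finsum_eq_sum_of_fintype _

-- Since `f 0 = f n = 0`, the sums of left and right heights agree.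
theorem area_eq_sum (x : MotzkinPath n) : x.area = ∑ k ∈ range n, x.f k := by
  have hshift : ∑ k ∈ range n, x.f (k + 1) = ∑ k ∈ range n, x.f k := by
    have h₁ := sum_range_succ' x.f n
    have h₂ := sum_range_succ x.f n
    rw [x.init] at h₁
    rw [x.tail n le_rfl] at h₂
    omega
  rw [area, sum_add_distrib, hshift]
  omega

theorem area_eq_sum_of_le (x : MotzkinPath n) {N : ℕ} (h : n ≤ N) :
    x.area = ∑ k ∈ range N, x.f k := by
  rw [area_eq_sum]
  exact sum_subset (range_subset_range.mpr h) fun k _ hk => x.tail k (by simpa using hk)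

def flat (n : ℕ) : MotzkinPath n :=
  ⟨fun _ => 0, rfl, fun _ _ => rfl, fun _ _ => Or.inr (Or.inl rfl)⟩

theorem eq_flat_of_le_one (hn : n ≤ 1) (x : MotzkinPath n) : x = flat n := by
  ext (_ | k)
  · exact x.init
  · exact x.tail _ (by omega)

theorem rankPoly_of_le_one (hn : n ≤ 1) : rankPoly n = 1 := by
  have : Subsingleton (MotzkinPath n) :=
    ⟨fun x y => (eq_flat_of_le_one hn x).trans (eq_flat_of_le_one hn y).symm⟩
  rw [rankPoly_eq_sum, Fintype.sum_subsingleton _ (flat n), area_eq_sum]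
  simp [flat]

def consH (γ : MotzkinPath n) : MotzkinPath (n + 1) where
  f := fun | 0 => 0 | i + 1 => γ.f i
  init := rfl
  tail
    | 0, h => absurd h (by omega)
    | i + 1, h => γ.tail i (by omega)
  step
    | 0, _ => Or.inr (Or.inl γ.init)
    | i + 1, h => γ.step i (by omega)

@[simp] theorem consH_f_zero (γ : MotzkinPath n) : (consH γ).f 0 = 0 := rfl

@[simp] theorem consH_f_succ (γ : MotzkinPath n) (i : ℕ) : (consH γ).f (i + 1) = γ.f i := rfl

theorem area_consH (γ : MotzkinPath n) : (consH γ).area = γ.area := by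
  rw [area_eq_sum, area_eq_sum, sum_range_succ']
  simp

/-- The path `U a D b`. -/
def consU {k m : ℕ} (a : MotzkinPath k) (b : MotzkinPath m) (h : k + m = n) :
    MotzkinPath (n + 2) where
  f := fun | 0 => 0 | i + 1 => if i ≤ k then a.f i + 1 else b.f (i - (k + 1))
  init := rfl
  tail
    | 0, hi => absurd hi (by omega)
    | i + 1, hi => by
      simp only [if_neg (show ¬i ≤ k by omega)]
      exact b.tail _ (by omega)
  step
    | 0, _ => Or.inl (by simp [a.init])
    | i + 1, hi => by
      dsimp only
      rcases lt_trichotomy i k with hik | rfl | hki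
      · simp only [if_pos hik.le, if_pos (Nat.succ_le_of_lt hik)]
        have := a.f_succ_le i; have := a.f_le_f_succ i; omega
      · simp only [le_refl, if_true, if_neg (Nat.not_succ_le_self i), Nat.sub_self, b.init,
          a.tail i le_rfl]
        omega
      · obtain ⟨j, rfl⟩ := Nat.exists_eq_add_of_lt hki
        simp only [if_neg (show ¬k + j + 1 ≤ k by omega), if_neg (show ¬k + j + 1 + 1 ≤ k by omega),
          show k + j + 1 - (k + 1) = j by omega, show k + j + 1 + 1 - (k + 1) = j + 1 by omega]
        have := b.f_succ_le j; have := b.f_le_f_succ j; omega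

section consU

variable {k m : ℕ} (a : MotzkinPath k) (b : MotzkinPath m) (h : k + m = n)

theorem consU_f_zero : (consU a b h).f 0 = 0 := rfl

theorem consU_f_succ_of_le {i : ℕ} (hi : i ≤ k) : (consU a b h).f (i + 1) = a.f i + 1 :=
  if_pos hi

theorem consU_f_add (j : ℕ) : (consU a b h).f (k + 2 + j) = b.f j := by
  rw [show k + 2 + j = k + 1 + j + 1 by omega]
  exact (if_neg (by omega)).trans (by rw [Nat.add_sub_cancel_left])

theorem area_consU : (consU a b h).area = a.area + b.area + (k + 1) := by
  rw [area_eq_sum, sum_range_succ', consU_f_zero, add_zero,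
    show n + 1 = k + 1 + m by omega, sum_range_add, a.area_eq_sum_of_le k.le_succ, b.area_eq_sum]
  have hup : ∀ i ∈ range (k + 1), (consU a b h).f (i + 1) = a.f i + 1 := fun i hi =>
    consU_f_succ_of_le a b h (Nat.lt_succ_iff.mp (mem_range.mp hi))
  have hdown : ∀ j ∈ range m, (consU a b h).f (k + 1 + j + 1) = b.f j := fun j _ => by
    rw [← consU_f_add a b h j]; ring_nf
  rw [sum_congr rfl hup, sum_congr rfl hdown, sum_add_distrib, sum_const, card_range,
    smul_eq_mul, mul_one]
  ring

end consU

/-- The part of `x` between positions `s` and `s + m`, lowered by `c`. -/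
def slice {N : ℕ} (x : MotzkinPath N) (s m c : ℕ) (hs : x.f s = c) (hm : x.f (s + m) = c)
    (hc : ∀ i ≤ m, c ≤ x.f (s + i)) : MotzkinPath m where
  f i := if i ≤ m then x.f (s + i) - c else 0
  init := by simp [hs]
  tail i hi := by
    split_ifs with him
    · rw [show i = m by omega, hm, Nat.sub_self]
    · rfl
  step i hi := by
    simp only [if_pos hi.le, if_pos (Nat.succ_le_of_lt hi), ← add_assoc]
    have := hc i hi.le; have := hc (i + 1) hi
    have := x.f_succ_le (s + i); have := x.f_le_f_succ (s + i)
    omega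

theorem slice_f_of_le {N : ℕ} (x : MotzkinPath N) {s m c : ℕ} {hs hm hc} {i : ℕ} (hi : i ≤ m) :
    (x.slice s m c hs hm hc).f i = x.f (s + i) - c :=
  if_pos hi

theorem exists_consH_eq (x : MotzkinPath (n + 1)) (h1 : x.f 1 = 0) :
    ∃ γ : MotzkinPath n, consH γ = x := by
  refine ⟨x.slice 1 n 0 h1 (x.tail _ (by omega)) fun _ _ => Nat.zero_le _, ?_⟩
  ext (_ | i)
  · exact x.init.symm
  · rw [consH_f_succ]
    by_cases hi : i ≤ n
    · rw [slice_f_of_le _ hi, Nat.add_comm 1 i, Nat.sub_zero]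
    · rw [x.tail _ (by omega)]; exact if_neg hi

theorem exists_first_return (x : MotzkinPath (n + 2)) (h1 : x.f 1 = 1) :
    ∃ k ≤ n, x.f (k + 2) = 0 ∧ ∀ i ≤ k, 1 ≤ x.f (i + 1) := by
  have hex : ∃ k, x.f (k + 2) = 0 := ⟨n, x.tail _ le_rfl⟩
  refine ⟨Nat.find hex, Nat.find_min' hex (x.tail _ le_rfl), Nat.find_spec hex, ?_⟩
  rintro (_ | i) hi
  · exact h1.ge
  · exact Nat.one_le_iff_ne_zero.mpr (Nat.find_min hex (show i < Nat.find hex by omega))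

theorem exists_consU_eq (x : MotzkinPath (n + 2)) (h1 : x.f 1 = 1) :
    ∃ (k : ℕ) (hk : k ≤ n) (a : MotzkinPath k) (b : MotzkinPath (n - k)),
      consU a b (Nat.add_sub_cancel' hk) = x := by
  obtain ⟨k, hk, hret, hpos⟩ := x.exists_first_return h1
  have hlast : x.f (1 + k) = 1 := by
    have : x.f (k + 1) ≤ x.f (k + 2) + 1 := x.f_le_f_succ (k + 1)
    have := hpos k le_rfl
    rw [Nat.add_comm 1 k]
    omega
  refine ⟨k, hk, x.slice 1 k 1 h1 hlast fun i hi => Nat.add_comm 1 i ▸ hpos i hi,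
    x.slice (k + 2) (n - k) 0 hret (x.tail _ (by omega)) fun _ _ => Nat.zero_le _, ?_⟩
  ext (_ | i)
  · exact x.init.symm
  · by_cases hik : i ≤ k
    · rw [consU_f_succ_of_le _ _ _ hik, slice_f_of_le _ hik, Nat.add_comm 1 i]
      have := hpos i hik; omega
    · obtain ⟨j, rfl⟩ : ∃ j, i = k + 1 + j := ⟨i - (k + 1), by omega⟩
      rw [show k + 1 + j + 1 = k + 2 + j by omega, consU_f_add]
      by_cases hj : j ≤ n - k
      · rw [slice_f_of_le _ hj, Nat.sub_zero]
      · rw [x.tail _ (by omega)]; exact if_neg hj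

theorem consH_injective : Function.Injective (consH : MotzkinPath n → MotzkinPath (n + 1)) :=
  fun _ _ h => ext <| funext fun i => congrFun (congrArg f h) (i + 1)

theorem consH_ne_consU (γ : MotzkinPath (n + 1)) {k m : ℕ} (a : MotzkinPath k)
    (b : MotzkinPath m) (h : k + m = n) : consH γ ≠ consU a b h := fun he => by
  have := congrFun (congrArg f he) 1
  rw [consH_f_succ, γ.init, consU_f_succ_of_le a b h (Nat.zero_le k)] at this
  omega

-- `k + 2` is the first return of `consU a b h` to the axis.
theorem le_of_consU_eq {k₁ m₁ k₂ m₂ : ℕ} {a₁ : MotzkinPath k₁} {b₁ : MotzkinPath m₁}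
    {a₂ : MotzkinPath k₂} {b₂ : MotzkinPath m₂} {h₁ : k₁ + m₁ = n} {h₂ : k₂ + m₂ = n}
    (he : consU a₁ b₁ h₁ = consU a₂ b₂ h₂) : k₁ ≤ k₂ := by
  by_contra! hlt
  have := congrFun (congrArg f he) (k₂ + 2)
  rw [consU_f_add _ _ _ 0, b₂.init, consU_f_succ_of_le _ _ _ (by omega : k₂ + 1 ≤ k₁)] at this
  omega

theorem consU_inj {k m : ℕ} {a₁ a₂ : MotzkinPath k} {b₁ b₂ : MotzkinPath m}
    (h : k + m = n) : consU a₁ b₁ h = consU a₂ b₂ h ↔ a₁ = a₂ ∧ b₁ = b₂ := by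
  refine ⟨fun he => ⟨ext <| funext fun i => ?_, ext <| funext fun j => ?_⟩, fun ⟨rfl, rfl⟩ => rfl⟩
  · by_cases hi : i ≤ k
    · have := congrFun (congrArg f he) (i + 1)
      rwa [consU_f_succ_of_le _ _ _ hi, consU_f_succ_of_le _ _ _ hi, Nat.add_right_cancel_iff]
        at this
    · rw [a₁.tail i (by omega), a₂.tail i (by omega)]
  · simpa only [consU_f_add] using congrFun (congrArg f he) (k + 2 + j)

def ofFirstStep :
    MotzkinPath (n + 1) ⊕ (Σ k : Fin (n + 1), MotzkinPath k × MotzkinPath (n - k)) →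
      MotzkinPath (n + 2)
  | .inl γ => consH γ
  | .inr ⟨k, a, b⟩ => consU a b (Nat.add_sub_cancel' k.is_le)

theorem ofFirstStep_injective : Function.Injective (ofFirstStep (n := n)) := by
  rintro (γ₁ | ⟨k₁, a₁, b₁⟩) (γ₂ | ⟨k₂, a₂, b₂⟩) he <;> dsimp only [ofFirstStep] at he
  · exact congrArg _ (consH_injective he)
  · exact absurd he (consH_ne_consU _ _ _ (Nat.add_sub_cancel' k₂.is_le))
  · exact absurd he.symm (consH_ne_consU _ _ _ (Nat.add_sub_cancel' k₁.is_le))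
  · obtain rfl : k₁ = k₂ := Fin.ext (le_antisymm (le_of_consU_eq he) (le_of_consU_eq he.symm))
    obtain ⟨rfl, rfl⟩ := (consU_inj _).mp he
    rfl

theorem ofFirstStep_surjective : Function.Surjective (ofFirstStep (n := n)) := by
  intro x
  rcases Nat.le_one_iff_eq_zero_or_eq_one.mp (x.f_le 1) with h1 | h1
  · obtain ⟨γ, rfl⟩ := x.exists_consH_eq h1
    exact ⟨.inl γ, rfl⟩
  · obtain ⟨k, hk, a, b, rfl⟩ := x.exists_consU_eq h1
    exact ⟨.inr ⟨⟨k, Nat.lt_succ_of_le hk⟩, a, b⟩, rfl⟩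

theorem sum_eq_sum_consH_add_sum_consU {M : Type*} [AddCommMonoid M]
    (g : MotzkinPath (n + 2) → M) :
    ∑ x, g x = ∑ γ, g (consH γ) + ∑ k : Fin (n + 1), ∑ a : MotzkinPath k,
      ∑ b : MotzkinPath (n - k), g (consU a b (Nat.add_sub_cancel' k.is_le)) := by
  rw [← Fintype.sum_bijective _ ⟨ofFirstStep_injective, ofFirstStep_surjective⟩
    (g ∘ ofFirstStep) g fun _ => rfl, Fintype.sum_sum_type, ← univ_sigma_univ, sum_sigma]
  simp only [Fintype.sum_prod_type]
  rfl

theorem rankPoly_add_two (n : ℕ) :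
    rankPoly (n + 2) = rankPoly (n + 1) +
      ∑ k ∈ range (n + 1), X ^ (k + 1) * rankPoly k * rankPoly (n - k) := by
  simp only [rankPoly_eq_sum, sum_eq_sum_consH_add_sum_consU, area_consH, area_consU,
    ← Fin.sum_univ_eq_sum_range]
  congr 1
  refine sum_congr rfl fun k _ => ?_
  rw [mul_assoc, sum_mul_sum, mul_sum]
  refine sum_congr rfl fun a _ => ?_
  rw [mul_sum]
  refine sum_congr rfl fun b _ => ?_
  ring

end MotzkinPath

open MotzkinPath Polynomial in
/-- The rank polynomials of the Motzkin lattices satisfy `M_0(q) = M_1(q) = 1`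
and `M_{n+2}(q) = M_{n+1}(q) + Σ_{k=0}^n q^{k+1} M_k(q) M_{n-k}(q)`. -/
theorem motzkin_rankPoly_recurrence :
    rankPoly 0 = 1 ∧ rankPoly 1 = 1 ∧
    ∀ n : ℕ, rankPoly (n + 2) = rankPoly (n + 1) +
      ∑ k ∈ Finset.range (n + 1), X ^ (k + 1) * rankPoly k * rankPoly (n - k) :=
  ⟨rankPoly_of_le_one zero_le_one, rankPoly_of_le_one le_rfl, rankPoly_add_two⟩
end
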